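/- Let G be a finite simple graph, ab an edge of G, L_a and L_b as above, λ ∈ Δ_{L_a,L_b}, and let φ^λ_{L_a,L_b} : K → R/I be the associated map. Let φ_{ab} : K → R/I be the restriction to K of the R-linear coordinate map M → R/I sending ε_{ab} to 1 mod I and ε_e to 0 for every edge e ≠ ab. If φ^λ_{L_a,L_b} is nonzero and φ^λ_{L_a,L_b} ≠ λ·φ_{ab}, then φ^λ_{L_a,L_b} is not the restriction to K of any R-linear map M → R/I; that is, it represents a nonzero class in T^2(R/I). -/

import Mathlib

open MvPolynomial

noncomputable section

def edgeIdeal (k : Type*) [Field k] {V : Type*} (E : V → V → Prop) :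
    Ideal (MvPolynomial V k) :=
  Ideal.span {m | ∃ a b, E a b ∧ m = X a * X b}

/-- The edge set of the graph, as a set of unordered pairs. -/
def edgeSet {V : Type*} {E : V → V → Prop} (hs : Symmetric E) : Set (Sym2 V) :=
  Sym2.fromRel (Std.Symm.mk (r := E) fun _ _ h => hs h)

/-- The edge `{u,v}` as an element of the edge set. -/
def mkEdge {V : Type*} {E : V → V → Prop} (hs : Symmetric E) (u v : V) (h : E u v) :
    edgeSet hs :=
  ⟨s(u, v), Sym2.fromRel_prop.mpr h⟩

/-- The monomial `x_u x_v` associated to the edge `{u,v}`. -/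
def edgeMon (k : Type*) [Field k] {V : Type*} {E : V → V → Prop} (hs : Symmetric E)
    (e : edgeSet hs) : MvPolynomial V k :=
  Sym2.lift ⟨fun a b => X a * X b, fun a b => mul_comm _ _⟩ e.1

/-- The map `j : M → R` from the free module on the edges, `ε_{uv} ↦ x_u x_v`. -/
def jmap (k : Type*) [Field k] {V : Type*} {E : V → V → Prop} (hs : Symmetric E) :
    (edgeSet hs →₀ MvPolynomial V k) →ₗ[MvPolynomial V k] MvPolynomial V k :=
  Finsupp.linearCombination (MvPolynomial V k) (edgeMon k hs)

/-- `K = ker j`, the module of relations between the generators of the edge ideal. -/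
def Kmod (k : Type*) [Field k] {V : Type*} {E : V → V → Prop} (hs : Symmetric E) :
    Submodule (MvPolynomial V k) (edgeSet hs →₀ MvPolynomial V k) :=
  LinearMap.ker (jmap k hs)

/-- `K₀`, the submodule of Koszul relations `j(ε_e)·ε_{e'} − j(ε_{e'})·ε_e`. -/
def K0 (k : Type*) [Field k] {V : Type*} {E : V → V → Prop} (hs : Symmetric E) :
    Submodule (MvPolynomial V k) (edgeSet hs →₀ MvPolynomial V k) :=
  Submodule.span (MvPolynomial V k)
    {z | ∃ e e' : edgeSet hs, e ≠ e' ∧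
      z = edgeMon k hs e • Finsupp.single e' (1 : MvPolynomial V k)
        - edgeMon k hs e' • Finsupp.single e (1 : MvPolynomial V k)}

/-- For adjacent edges `uv` and `vw`, the relation `x_u·ε_{vw} − x_w·ε_{uv}` (equal to
`±r_{uv,vw}`), as an element of `K`. -/
def relK (k : Type*) [Field k] {V : Type*} {E : V → V → Prop} (hs : Symmetric E)
    (u v w : V) (h1 : E u v) (h2 : E v w) : Kmod k hs :=
  ⟨(X u : MvPolynomial V k) • Finsupp.single (mkEdge hs v w h2) (1 : MvPolynomial V k)
      - (X w : MvPolynomial V k) • Finsupp.single (mkEdge hs u v h1) (1 : MvPolynomial V k), by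
    simp only [Kmod, LinearMap.mem_ker, jmap]
    simp [Finsupp.smul_single, map_sub, edgeMon, mkEdge, Sym2.lift_mk]
    ring⟩

/-- `φ : K → R/I` vanishes on the Koszul relations `K₀`. -/
def VanishesOnK0 (k : Type*) [Field k] {V : Type*} {E : V → V → Prop} (hs : Symmetric E)
    (φ : Kmod k hs →ₗ[MvPolynomial V k] MvPolynomial V k ⧸ edgeIdeal k E) : Prop :=
  ∀ z : Kmod k hs, (z : edgeSet hs →₀ MvPolynomial V k) ∈ K0 k hs → φ z = 0

/-- `T²(R/I) = 0`: every `R`-linear map `K → R/I` vanishing on `K₀` is the restriction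
to `K` of an `R`-linear map `M → R/I`. -/
def T2Vanishes (k : Type*) [Field k] {V : Type*} {E : V → V → Prop} (hs : Symmetric E) : Prop :=
  ∀ φ : Kmod k hs →ₗ[MvPolynomial V k] MvPolynomial V k ⧸ edgeIdeal k E,
    VanishesOnK0 k hs φ →
    ∃ ψ : (edgeSet hs →₀ MvPolynomial V k) →ₗ[MvPolynomial V k]
        MvPolynomial V k ⧸ edgeIdeal k E,
      ∀ z : Kmod k hs, φ z = ψ z

open scoped Classical in
/-- The neighborhood of a vertex. -/
def nbhd {V : Type*} [Fintype V] (E : V → V → Prop) (v : V) : Finset V :=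
  Finset.univ.filter (fun w => E v w)


open scoped Classical in
/-- The set `Δ = Δ^a ∪ Δ^b` associated to the edge `ab` and the subsets
`L_a ⊆ N(a)\{b}` and `L_b ⊆ N(b)\{a}`: the vertices `u` of `(N(a)\{b}) \ L_a`
(resp. `(N(b)\{a}) \ L_b`) with `x_u x_y ∉ I` for some `y ∈ L_a ∪ L_b`. -/
def DeltaF (k : Type*) [Field k] {V : Type*} [Fintype V] [DecidableEq V]
    (E : V → V → Prop) (a b : V) (La Lb : Finset V) : Finset V :=
  (((nbhd E a).erase b \ La).filter
      (fun u => ∃ y ∈ La ∪ Lb, (X u * X y : MvPolynomial V k) ∉ edgeIdeal k E)) ∪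
  (((nbhd E b).erase a \ Lb).filter
      (fun u => ∃ y ∈ La ∪ Lb, (X u * X y : MvPolynomial V k) ∉ edgeIdeal k E))

open scoped Classical in
/-- The set `Δ_{L_a,L_b}` of squarefree monomials `√(∏_{u ∈ Δ} x_{c u})` over all choice
functions `c` with `c u ∈ Δ_u = N(u)\{a,b}` for every `u ∈ Δ`. -/
def DeltaSet (k : Type*) [Field k] {V : Type*} [Fintype V] [DecidableEq V]
    (E : V → V → Prop) (a b : V) (La Lb : Finset V) : Set (MvPolynomial V k) :=
  {m | ∃ c : V → V,
    (∀ u ∈ DeltaF k E a b La Lb, c u ∈ nbhd E u \ {a, b}) ∧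
    m = ∏ x ∈ (DeltaF k E a b La Lb).image c, X x}

/-- `φ : K → R/I` is the map `φ^λ_{L_a,L_b}`: it vanishes on `K₀`, sends
`r_{ab,ax} ↦ (−1)^{σ({ab,ax},ax)}·λ·x_x` for `x ∈ L_a`, sends
`r_{ab,bx} ↦ (−1)^{σ({ab,bx},bx)}·λ·x_x` for `x ∈ L_b`, and kills `r_{e,e'}` for every
other pair of distinct adjacent edges.  (The element
`relK x a b = x_x·ε_{ab} − x_b·ε_{ax}` equals `(−1)^{σ({ab,ax},ax)}·r_{ab,ax}`, so the
signs are absorbed and the description below is independent of the total order `≺`.) -/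
def IsT2Map (k : Type*) [Field k] {V : Type*} {E : V → V → Prop} (hs : Symmetric E)
    (a b : V) (La Lb : Finset V) (lam : MvPolynomial V k)
    (φ : Kmod k hs →ₗ[MvPolynomial V k] MvPolynomial V k ⧸ edgeIdeal k E) : Prop :=
  VanishesOnK0 k hs φ ∧
  (∀ x ∈ La, ∀ (h1 : E x a) (h2 : E a b),
      φ (relK k hs x a b h1 h2) = Ideal.Quotient.mk (edgeIdeal k E) (lam * X x)) ∧
  (∀ x ∈ Lb, ∀ (h1 : E x b) (h2 : E b a),
      φ (relK k hs x b a h1 h2) = Ideal.Quotient.mk (edgeIdeal k E) (lam * X x)) ∧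
  (∀ u v w (h1 : E u v) (h2 : E v w), u ≠ w →
    (∀ x ∈ La, ({s(u, v), s(v, w)} : Set (Sym2 V)) ≠ {s(a, b), s(a, x)}) →
    (∀ x ∈ Lb, ({s(u, v), s(v, w)} : Set (Sym2 V)) ≠ {s(a, b), s(b, x)}) →
    φ (relK k hs u v w h1 h2) = 0)
section SyzygyAux

variable {k : Type*} [Field k] {V : Type*} {E : V → V → Prop} (hs : Symmetric E)

/-- The multidegree of an edge. -/
def edgeDeg (e : edgeSet hs) : V →₀ ℕ :=
  Sym2.lift ⟨fun u v => Finsupp.single u 1 + Finsupp.single v 1,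
    fun u v => add_comm _ _⟩ e.1

lemma edge_cases (e : edgeSet hs) : ∃ u v, ∃ h : E u v, e = mkEdge hs u v h := by
  obtain ⟨s, hsm⟩ := e
  induction s using Sym2.ind with
  | _ u v => exact ⟨u, v, Sym2.fromRel_prop.mp hsm, rfl⟩

lemma mkEdge_symm {u v : V} (h : E u v) (h' : E v u) :
    mkEdge hs v u h' = mkEdge hs u v h := Subtype.ext Sym2.eq_swap

lemma edgeDeg_mk {u v : V} (h : E u v) :
    edgeDeg hs (mkEdge hs u v h) = Finsupp.single u 1 + Finsupp.single v 1 := by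
  simp [edgeDeg, mkEdge]

lemma edgeMon_mk (k : Type*) [Field k] {u v : V} (h : E u v) :
    edgeMon k hs (mkEdge hs u v h) = MvPolynomial.monomial
      (Finsupp.single u 1 + Finsupp.single v 1) 1 := by
  simp [edgeMon, mkEdge, MvPolynomial.X, MvPolynomial.monomial_mul]

lemma edgeMon_eq (k : Type*) [Field k] (e : edgeSet hs) :
    edgeMon k hs e = MvPolynomial.monomial (edgeDeg hs e) 1 := by
  obtain ⟨u, v, h, rfl⟩ := edge_cases hs e
  rw [edgeMon_mk, edgeDeg_mk]

lemma edgeMon_mem (k : Type*) [Field k] (e : edgeSet hs) :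
    edgeMon k hs e ∈ edgeIdeal k E := by
  obtain ⟨u, v, h, rfl⟩ := edge_cases hs e
  have : edgeMon k hs (mkEdge hs u v h) = MvPolynomial.X u * MvPolynomial.X v := by
    simp [edgeMon, mkEdge]
  rw [this]
  exact Ideal.subset_span ⟨u, v, h, rfl⟩

/-- The generating set for `K`: Koszul relations plus adjacency relations. -/
def genSet (k : Type*) [Field k] {V : Type*} {E : V → V → Prop} (hs : Symmetric E) :
    Set (edgeSet hs →₀ MvPolynomial V k) :=
  {z | ∃ e e' : edgeSet hs, e ≠ e' ∧
      z = edgeMon k hs e • Finsupp.single e' (1 : MvPolynomial V k)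
        - edgeMon k hs e' • Finsupp.single e (1 : MvPolynomial V k)}
  ∪ {z | ∃ u v w, ∃ h1 : E u v, ∃ h2 : E v w, z = ↑(relK k hs u v w h1 h2)}

lemma jmap_apply (k : Type*) [Field k] (z : edgeSet hs →₀ MvPolynomial V k) :
    jmap k hs z = ∑ e ∈ z.support, z e * edgeMon k hs e := by
  rw [jmap, Finsupp.linearCombination_apply, Finsupp.sum]
  simp [smul_eq_mul]

lemma disjoint_case (μ : V →₀ ℕ) (u v p q : V) (h1 : E u v) (h2 : E p q)
    (hup : u ≠ p) (huq : u ≠ q) (hvp : v ≠ p) (hvq : v ≠ q)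
    (he : edgeDeg hs (mkEdge hs u v h1) ≤ μ) (he2 : edgeDeg hs (mkEdge hs p q h2) ≤ μ) :
    Finsupp.single (mkEdge hs u v h1)
        (MvPolynomial.monomial (μ - edgeDeg hs (mkEdge hs u v h1)) (1 : k))
      - Finsupp.single (mkEdge hs p q h2)
        (MvPolynomial.monomial (μ - edgeDeg hs (mkEdge hs p q h2)) 1)
      ∈ Submodule.span (MvPolynomial V k) (genSet k hs) := by
  classical
  rw [edgeDeg_mk] at he he2
  rw [edgeDeg_mk, edgeDeg_mk]
  set d1 : V →₀ ℕ := Finsupp.single u 1 + Finsupp.single v 1 with hd1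
  set d2 : V →₀ ℕ := Finsupp.single p 1 + Finsupp.single q 1 with hd2
  have hsum : d1 + d2 ≤ μ := by
    rw [Finsupp.le_def]; intro x
    have hx1 := Finsupp.le_def.mp he x
    have hx2 := Finsupp.le_def.mp he2 x
    have h5 : ¬ (u = x ∧ p = x) := fun hh => hup (hh.1.trans hh.2.symm)
    have h6 : ¬ (u = x ∧ q = x) := fun hh => huq (hh.1.trans hh.2.symm)
    have h7 : ¬ (v = x ∧ p = x) := fun hh => hvp (hh.1.trans hh.2.symm)
    have h8 : ¬ (v = x ∧ q = x) := fun hh => hvq (hh.1.trans hh.2.symm)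
    simp only [hd1, hd2, Finsupp.add_apply, Finsupp.single_apply] at hx1 hx2 ⊢
    by_cases hxu : u = x <;> by_cases hxv : v = x <;> by_cases hxp : p = x <;>
      by_cases hxq : q = x <;> simp_all <;> omega
  have key1 : (μ - (d1 + d2)) + d2 = μ - d1 := by
    rw [tsub_add_eq_tsub_tsub]
    exact tsub_add_cancel_of_le (le_tsub_of_add_le_left hsum)
  have key2 : (μ - (d1 + d2)) + d1 = μ - d2 := by
    have hcomm : d1 + d2 = d2 + d1 := add_comm _ _
    rw [hcomm, tsub_add_eq_tsub_tsub]
    exact tsub_add_cancel_of_le (le_tsub_of_add_le_left (hcomm ▸ hsum))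
  have hne : mkEdge hs u v h1 ≠ mkEdge hs p q h2 := by
    intro hcon
    have := Subtype.ext_iff.mp hcon
    simp only [mkEdge, Sym2.eq_iff] at this
    tauto
  have key : Finsupp.single (mkEdge hs u v h1) (MvPolynomial.monomial (μ - d1) (1 : k))
      - Finsupp.single (mkEdge hs p q h2) (MvPolynomial.monomial (μ - d2) 1)
      = -((MvPolynomial.monomial (μ - (d1 + d2)) (1:k)) •
        (edgeMon k hs (mkEdge hs u v h1) • Finsupp.single (mkEdge hs p q h2) (1 : MvPolynomial V k)
          - edgeMon k hs (mkEdge hs p q h2) • Finsupp.single (mkEdge hs u v h1) 1)) := by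
    simp only [edgeMon_eq, edgeDeg_mk, smul_sub, neg_sub, smul_smul,
      MvPolynomial.monomial_mul, Finsupp.smul_single, smul_eq_mul, mul_one, one_mul, ← hd1, ← hd2]
    rw [key1, key2]
  rw [key]
  exact Submodule.neg_mem _ (Submodule.smul_mem _ _
    (Submodule.subset_span (Or.inl ⟨_, _, hne, rfl⟩)))

end SyzygyAux
section SyzygyAux2

variable {k : Type*} [Field k] {V : Type*} {E : V → V → Prop} (hs : Symmetric E)

lemma relK_coe (u v w : V) (h1 : E u v) (h2 : E v w) :
    (↑(relK k hs u v w h1 h2) : edgeSet hs →₀ MvPolynomial V k)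
      = (MvPolynomial.X u : MvPolynomial V k) • Finsupp.single (mkEdge hs v w h2) 1
        - (MvPolynomial.X w : MvPolynomial V k) • Finsupp.single (mkEdge hs u v h1) 1 := rfl

lemma relK_neg (u v w : V) (h1 : E u v) (h2 : E v w) :
    relK k hs u v w h1 h2 = - relK k hs w v u (hs h2) (hs h1) := by
  apply Subtype.ext
  rw [Submodule.coe_neg, relK_coe, relK_coe]
  rw [mkEdge_symm hs h1 (hs h1), mkEdge_symm hs h2 (hs h2)]
  abel

lemma relK_self (u v : V) (h1 : E u v) (h2 : E v u) :
    relK k hs u v u h1 h2 = 0 := by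
  apply Subtype.ext
  rw [relK_coe, mkEdge_symm hs h1 h2]
  simp

lemma shared_case (hirr : ∀ x, ¬ E x x) (μ : V →₀ ℕ) (u v w : V) (h1 : E u v) (h2 : E v w)
    (huw : u ≠ w)
    (he : edgeDeg hs (mkEdge hs u v h1) ≤ μ) (he2 : edgeDeg hs (mkEdge hs v w h2) ≤ μ) :
    Finsupp.single (mkEdge hs u v h1)
        (MvPolynomial.monomial (μ - edgeDeg hs (mkEdge hs u v h1)) (1 : k))
      - Finsupp.single (mkEdge hs v w h2)
        (MvPolynomial.monomial (μ - edgeDeg hs (mkEdge hs v w h2)) 1)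
      ∈ Submodule.span (MvPolynomial V k) (genSet k hs) := by
  classical
  have huv : u ≠ v := fun h => hirr v (h ▸ h1)
  have hvw : v ≠ w := fun h => hirr v (h ▸ h2)
  rw [edgeDeg_mk] at he he2
  rw [edgeDeg_mk, edgeDeg_mk]
  set d1 : V →₀ ℕ := Finsupp.single u 1 + Finsupp.single v 1 with hd1
  set d2 : V →₀ ℕ := Finsupp.single v 1 + Finsupp.single w 1 with hd2
  set d3 : V →₀ ℕ := d1 + Finsupp.single w 1 with hd3
  have hsum : d3 ≤ μ := by
    rw [Finsupp.le_def]; intro x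
    have hx1 := Finsupp.le_def.mp he x
    have hx2 := Finsupp.le_def.mp he2 x
    have h5 : ¬ (u = x ∧ v = x) := fun hh => huv (hh.1.trans hh.2.symm)
    have h6 : ¬ (v = x ∧ w = x) := fun hh => hvw (hh.1.trans hh.2.symm)
    have h7 : ¬ (u = x ∧ w = x) := fun hh => huw (hh.1.trans hh.2.symm)
    simp only [hd1, hd2, hd3, Finsupp.add_apply, Finsupp.single_apply] at hx1 hx2 ⊢
    by_cases hxu : u = x <;> by_cases hxv : v = x <;> by_cases hxw : w = x <;>
      simp_all <;> omega
  have key1 : (μ - d3) + Finsupp.single w 1 = μ - d1 := by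
    rw [hd3, tsub_add_eq_tsub_tsub]
    exact tsub_add_cancel_of_le (le_tsub_of_add_le_left (hd3 ▸ hsum))
  have key2 : (μ - d3) + Finsupp.single u 1 = μ - d2 := by
    have hcomm : d3 = d2 + Finsupp.single u 1 := by
      rw [hd3, hd1, hd2]; abel
    rw [hcomm, tsub_add_eq_tsub_tsub]
    exact tsub_add_cancel_of_le (le_tsub_of_add_le_left (hcomm ▸ hsum))
  have key : Finsupp.single (mkEdge hs u v h1) (MvPolynomial.monomial (μ - d1) (1 : k))
      - Finsupp.single (mkEdge hs v w h2) (MvPolynomial.monomial (μ - d2) 1)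
      = (MvPolynomial.monomial (μ - d3) (1:k)) •
          (↑(relK k hs w v u (hs h2) (hs h1)) : edgeSet hs →₀ MvPolynomial V k) := by
    rw [relK_coe, mkEdge_symm hs h1 (hs h1), mkEdge_symm hs h2 (hs h2)]
    simp only [smul_sub, smul_smul, MvPolynomial.X, MvPolynomial.monomial_mul,
      Finsupp.smul_single, smul_eq_mul, mul_one, one_mul]
    rw [key1, key2]
  rw [key]
  exact Submodule.smul_mem _ _
    (Submodule.subset_span (Or.inr ⟨w, v, u, hs h2, hs h1, rfl⟩))

lemma pair_case (hirr : ∀ x, ¬ E x x) (μ : V →₀ ℕ) (e e2 : edgeSet hs)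
    (he : edgeDeg hs e ≤ μ) (he2 : edgeDeg hs e2 ≤ μ) :
    Finsupp.single e (MvPolynomial.monomial (μ - edgeDeg hs e) (1 : k))
      - Finsupp.single e2 (MvPolynomial.monomial (μ - edgeDeg hs e2) 1)
      ∈ Submodule.span (MvPolynomial V k) (genSet k hs) := by
  classical
  by_cases hne : e = e2
  · rw [hne, sub_self]; exact Submodule.zero_mem _
  obtain ⟨u, v, h1, rfl⟩ := edge_cases hs e
  obtain ⟨p, q, h2, rfl⟩ := edge_cases hs e2
  have hmk : ∀ (x y : V) (hx : E x y) (hy : E y x), mkEdge hs x y hx = mkEdge hs y x hy :=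
    fun x y hx hy => (mkEdge_symm hs hx hy).symm
  by_cases hvp : v = p
  · subst hvp
    have huq : u ≠ q := by
      intro h; subst h
      exact hne (hmk u v h1 h2)
    exact shared_case hs hirr μ u v q h1 h2 huq he he2
  by_cases hvq : v = q
  · subst hvq
    rw [hmk p v h2 (hs h2)] at hne he2 ⊢
    have hup : u ≠ p := by
      intro h; subst h
      exact hne (hmk u v h1 (hs h2))
    exact shared_case hs hirr μ u v p h1 (hs h2) hup he he2
  by_cases hup : u = p
  · subst hup
    rw [hmk u v h1 (hs h1)] at hne he ⊢
    have hvq2 : v ≠ q := hvq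
    exact shared_case hs hirr μ v u q (hs h1) h2 hvq2 he he2
  by_cases huq : u = q
  · subst huq
    rw [hmk u v h1 (hs h1)] at hne he ⊢
    rw [hmk p u h2 (hs h2)] at hne he2 ⊢
    exact shared_case hs hirr μ v u p (hs h1) (hs h2) hvp he he2
  · exact disjoint_case hs μ u v p q h1 h2 hup huq hvp hvq he he2

end SyzygyAux2
section SyzygyMain

open MvPolynomial

variable {k : Type*} [Field k] {V : Type*} {E : V → V → Prop} (hs : Symmetric E)

/-- The graded piece of `z` in multidegree `μ`, relative to the twists `edgeDeg`. -/
noncomputable def gradedPiece [DecidableEq (edgeSet hs)] [DecidableEq V]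
    (z : edgeSet hs →₀ MvPolynomial V k) (μ : V →₀ ℕ) :
    edgeSet hs →₀ MvPolynomial V k :=
  ∑ e ∈ z.support, Finsupp.single e
    (if edgeDeg hs e ≤ μ then monomial (μ - edgeDeg hs e) (coeff (μ - edgeDeg hs e) (z e)) else 0)

theorem ker_le_span (hirr : ∀ x, ¬ E x x) (z : edgeSet hs →₀ MvPolynomial V k)
    (hz : jmap k hs z = 0) : z ∈ Submodule.span (MvPolynomial V k) (genSet k hs) := by
  classical
  -- the finite set of relevant multidegrees
  set U : Finset (V →₀ ℕ) :=
    z.support.biUnion (fun e => (z e).support.image (· + edgeDeg hs e)) with hU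
  -- decomposition
  have hdecomp : z = ∑ μ ∈ U, gradedPiece hs z μ := by
    refine Finsupp.ext fun e => ?_
    rw [Finsupp.finset_sum_apply]
    by_cases he : e ∈ z.support
    · have happ : ∀ μ, gradedPiece hs z μ e
          = (if edgeDeg hs e ≤ μ then
              monomial (μ - edgeDeg hs e) (coeff (μ - edgeDeg hs e) (z e)) else 0) := by
        intro μ
        rw [gradedPiece, Finsupp.finset_sum_apply]
        rw [Finset.sum_eq_single e]
        · rw [Finsupp.single_eq_same]
        · intro e2 _ hne; rw [Finsupp.single_eq_of_ne' hne]
        · intro hcon; exact absurd he hcon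
      simp only [happ]
      have hsub : (z e).support.image (· + edgeDeg hs e) ⊆ U := fun μ hμ =>
        Finset.mem_biUnion.mpr ⟨e, he, hμ⟩
      have hvan : ∀ μ ∈ U, μ ∉ (z e).support.image (· + edgeDeg hs e) →
          (if edgeDeg hs e ≤ μ then
            monomial (μ - edgeDeg hs e) (coeff (μ - edgeDeg hs e) (z e)) else 0) = 0 := by
        intro μ _ hμ
        by_cases hle : edgeDeg hs e ≤ μ
        · rw [if_pos hle]
          have hc0 : coeff (μ - edgeDeg hs e) (z e) = 0 := by
            by_contra hc
            exact hμ (Finset.mem_image.mpr ⟨μ - edgeDeg hs e,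
              MvPolynomial.mem_support_iff.mpr hc, tsub_add_cancel_of_le hle⟩)
          rw [hc0, map_zero]
        · rw [if_neg hle]
      rw [← Finset.sum_subset hsub hvan]
      have hinj : ∀ x ∈ (z e).support, ∀ y ∈ (z e).support,
          x + edgeDeg hs e = y + edgeDeg hs e → x = y :=
        fun x _ y _ hxy => add_right_cancel hxy
      rw [Finset.sum_image hinj]
      have hcong : ∀ ν ∈ (z e).support,
          (if edgeDeg hs e ≤ ν + edgeDeg hs e then
            monomial (ν + edgeDeg hs e - edgeDeg hs e)
              (coeff (ν + edgeDeg hs e - edgeDeg hs e) (z e)) else 0)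
          = monomial ν (coeff ν (z e)) := by
        intro ν _
        rw [if_pos ((le_add_iff_nonneg_left _).mpr zero_le), add_tsub_cancel_right]
      rw [Finset.sum_congr rfl hcong]
      conv_lhs => rw [(z e).as_sum]
    · have hze : z e = 0 := Finsupp.notMem_support_iff.mp he
      rw [hze]
      symm
      apply Finset.sum_eq_zero
      intro μ _
      rw [gradedPiece, Finsupp.finset_sum_apply]
      apply Finset.sum_eq_zero
      intro e2 he2
      rw [Finsupp.single_eq_of_ne']
      intro hcon; rw [hcon] at he2; exact he he2
  -- each graded piece is in the span
  have hpiece : ∀ μ, gradedPiece hs z μ ∈ Submodule.span (MvPolynomial V k) (genSet k hs) := by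
    intro μ
    set T : Finset (edgeSet hs) := z.support.filter (fun e => edgeDeg hs e ≤ μ) with hT
    -- the coefficient sum vanishes
    have hcoeff : ∑ e ∈ T, coeff (μ - edgeDeg hs e) (z e) = 0 := by
      have h0 : coeff μ (jmap k hs z) = 0 := by rw [hz, coeff_zero]
      rw [jmap_apply] at h0
      rw [MvPolynomial.coeff_sum] at h0
      have : ∀ e ∈ z.support, coeff μ (z e * edgeMon k hs e)
          = if edgeDeg hs e ≤ μ then coeff (μ - edgeDeg hs e) (z e) else 0 := by
        intro e _
        rw [edgeMon_eq, coeff_mul_monomial']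
        split_ifs with h
        · rw [mul_one]
        · rfl
      rw [Finset.sum_congr rfl this, Finset.sum_ite, Finset.sum_const_zero, add_zero] at h0
      exact h0
    -- rewrite the graded piece as a sum over T
    have hrw : gradedPiece hs z μ
        = ∑ e ∈ T, Finsupp.single e
            (monomial (μ - edgeDeg hs e) (coeff (μ - edgeDeg hs e) (z e))) := by
      rw [gradedPiece]
      rw [← Finset.sum_filter_add_sum_filter_not z.support (fun e => edgeDeg hs e ≤ μ)]
      have hz2 : ∑ e ∈ z.support.filter (fun e => ¬ edgeDeg hs e ≤ μ),
          Finsupp.single e (if edgeDeg hs e ≤ μ then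
            monomial (μ - edgeDeg hs e) (coeff (μ - edgeDeg hs e) (z e)) else 0) = 0 := by
        apply Finset.sum_eq_zero
        intro e he
        rw [if_neg (Finset.mem_filter.mp he).2, Finsupp.single_zero]
      rw [hz2, add_zero]
      apply Finset.sum_congr rfl
      intro e he
      rw [if_pos (Finset.mem_filter.mp he).2]
    rw [hrw]
    by_cases hTe : T = ∅
    · rw [hTe, Finset.sum_empty]; exact Submodule.zero_mem _
    obtain ⟨e₀, he₀⟩ := Finset.nonempty_iff_ne_empty.mpr hTe
    have he₀le : edgeDeg hs e₀ ≤ μ := (Finset.mem_filter.mp he₀).2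
    have hone : ∀ e ∈ T, Finsupp.single e
        (monomial (μ - edgeDeg hs e) (coeff (μ - edgeDeg hs e) (z e)))
        = (C (coeff (μ - edgeDeg hs e) (z e)) : MvPolynomial V k) •
            Finsupp.single e (monomial (μ - edgeDeg hs e) (1:k)) := by
      intro e _
      rw [Finsupp.smul_single, smul_eq_mul, C_mul_monomial, mul_one]
    have hsum2 : ∑ e ∈ T, (C (coeff (μ - edgeDeg hs e) (z e)) : MvPolynomial V k) •
        Finsupp.single e₀ (monomial (μ - edgeDeg hs e₀) (1:k)) = 0 := by
      rw [← Finset.sum_smul, ← map_sum, hcoeff, map_zero, zero_smul]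
    have hsplit : ∑ e ∈ T, Finsupp.single e
          (monomial (μ - edgeDeg hs e) (coeff (μ - edgeDeg hs e) (z e)))
        = ∑ e ∈ T, (C (coeff (μ - edgeDeg hs e) (z e)) : MvPolynomial V k) •
            (Finsupp.single e (monomial (μ - edgeDeg hs e) (1:k))
              - Finsupp.single e₀ (monomial (μ - edgeDeg hs e₀) 1)) := by
      have step2 : ∑ e ∈ T, (C (coeff (μ - edgeDeg hs e) (z e)) : MvPolynomial V k) •
            Finsupp.single e (monomial (μ - edgeDeg hs e) (1:k))
          = ∑ e ∈ T, ((C (coeff (μ - edgeDeg hs e) (z e)) : MvPolynomial V k) •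
              (Finsupp.single e (monomial (μ - edgeDeg hs e) (1:k))
                - Finsupp.single e₀ (monomial (μ - edgeDeg hs e₀) 1))
              + (C (coeff (μ - edgeDeg hs e) (z e)) : MvPolynomial V k) •
                Finsupp.single e₀ (monomial (μ - edgeDeg hs e₀) 1)) := by
        apply Finset.sum_congr rfl
        intro e _
        rw [smul_sub, sub_add_cancel]
      rw [Finset.sum_congr rfl hone, step2, Finset.sum_add_distrib, hsum2, add_zero]
    rw [hsplit]
    apply Submodule.sum_mem
    intro e he
    exact Submodule.smul_mem _ _
      (pair_case hs hirr μ e e₀ (Finset.mem_filter.mp he).2 he₀le)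
  rw [hdecomp]
  exact Submodule.sum_mem _ (fun μ _ => hpiece μ)

end SyzygyMain
section MainAux

open MvPolynomial

variable {k : Type*} [Field k] {V : Type*} {E : V → V → Prop} (hs : Symmetric E)

lemma gen_mem_ker (z : edgeSet hs →₀ MvPolynomial V k) (hz : z ∈ genSet k hs) :
    z ∈ Kmod k hs := by
  rcases hz with ⟨e, e2, hne, rfl⟩ | ⟨u, v, w, h1, h2, rfl⟩
  · simp only [Kmod, LinearMap.mem_ker, map_sub, map_smul, jmap,
      Finsupp.linearCombination_single, one_smul, smul_eq_mul]
    ring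
  · exact (relK k hs u v w h1 h2).2

/-- If a linear map on `K` kills `K₀` and all the `relK`, it is zero. -/
lemma vanish_of_gen (hirr : ∀ x, ¬ E x x) {N : Type*} [AddCommGroup N]
    [Module (MvPolynomial V k) N] (χ : Kmod k hs →ₗ[MvPolynomial V k] N)
    (h0 : ∀ z : Kmod k hs, (z : edgeSet hs →₀ MvPolynomial V k) ∈ K0 k hs → χ z = 0)
    (hrel : ∀ u v w (h1 : E u v) (h2 : E v w), χ (relK k hs u v w h1 h2) = 0) :
    ∀ z, χ z = 0 := by
  intro z
  have hspan : (z : edgeSet hs →₀ MvPolynomial V k)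
      ∈ Submodule.span (MvPolynomial V k) (genSet k hs) :=
    ker_le_span hs hirr _ (LinearMap.mem_ker.mp z.2)
  have hle : Submodule.span (MvPolynomial V k) (genSet k hs)
      ≤ Submodule.map (Kmod k hs).subtype (LinearMap.ker χ) := by
    rw [Submodule.span_le]
    intro x hx
    refine ⟨⟨x, gen_mem_ker hs x hx⟩, ?_, rfl⟩
    simp only [SetLike.mem_coe, LinearMap.mem_ker]
    rcases hx with ⟨e, e2, hne, hxe⟩ | ⟨u, v, w, h1, h2, hxe⟩
    · refine h0 _ ?_
      show x ∈ K0 k hs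
      rw [hxe]
      exact Submodule.subset_span ⟨e, e2, hne, rfl⟩
    · have : (⟨x, gen_mem_ker hs x (Or.inr ⟨u, v, w, h1, h2, hxe⟩)⟩ : Kmod k hs)
          = relK k hs u v w h1 h2 := Subtype.ext hxe
      rw [this]; exact hrel u v w h1 h2
  obtain ⟨w, hw, hww⟩ := hle hspan
  have : w = z := Subtype.ext hww
  rw [← this]
  exact LinearMap.mem_ker.mp hw

/-- every monomial occurring in an element of the edge ideal lies in the edge ideal -/
lemma mon_mem_of_coeff {q : MvPolynomial V k} (hq : q ∈ edgeIdeal k E) :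
    ∀ μ, coeff μ q ≠ 0 → (monomial μ 1 : MvPolynomial V k) ∈ edgeIdeal k E := by
  classical
  refine Submodule.span_induction ?_ ?_ ?_ ?_ hq
  · rintro x ⟨a, b, hab, rfl⟩ μ hμ
    have hx : (X a * X b : MvPolynomial V k)
        = monomial (Finsupp.single a 1 + Finsupp.single b 1) 1 := by
      rw [X, X, monomial_mul, one_mul]
    rw [hx, coeff_monomial] at hμ
    split_ifs at hμ with h
    · rw [← h, ← hx]; exact Ideal.subset_span ⟨a, b, hab, rfl⟩
    · exact absurd rfl hμ
  · intro μ hμ; rw [coeff_zero] at hμ; exact absurd rfl hμ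
  · intro x y _ _ hx hy μ hμ
    rw [coeff_add] at hμ
    by_cases h : coeff μ x = 0
    · exact hy μ (by rw [h, zero_add] at hμ; exact hμ)
    · exact hx μ h
  · intro r x _ hx μ hμ
    rw [smul_eq_mul, coeff_mul] at hμ
    obtain ⟨⟨i, j⟩, hij, hne⟩ := Finset.exists_ne_zero_of_sum_ne_zero hμ
    have hj : coeff j x ≠ 0 := fun h => hne (by rw [h, mul_zero])
    have : (monomial μ 1 : MvPolynomial V k) = monomial i 1 * monomial j 1 := by
      rw [monomial_mul, one_mul, Finset.HasAntidiagonal.mem_antidiagonal.mp hij]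
    rw [this]
    exact Ideal.mul_mem_left _ _ (hx j hj)

lemma prod_X_eq {W : Type*} (T : Finset W) :
    ∏ x ∈ T, (X x : MvPolynomial W k) = monomial (∑ x ∈ T, Finsupp.single x 1) 1 := by
  classical
  induction T using Finset.induction_on with
  | empty => simp
  | insert _ _ hnotmem ih =>
      rw [Finset.prod_insert hnotmem, Finset.sum_insert hnotmem, ih,
        X, monomial_mul, one_mul]

lemma lam_spec {W : Type*} [Fintype W] [DecidableEq W] {F : W → W → Prop}
    (a b : W) (La Lb : Finset W) {lam : MvPolynomial W k}
    (hlam : lam ∈ DeltaSet k F a b La Lb) :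
    ∃ ℓ : W →₀ ℕ, lam = monomial ℓ 1 ∧ ℓ a = 0 ∧ ℓ b = 0 := by
  classical
  obtain ⟨c, hc, rfl⟩ := hlam
  set T := (DeltaF k F a b La Lb).image c with hT
  refine ⟨∑ x ∈ T, Finsupp.single x 1, ?_, ?_, ?_⟩
  · exact prod_X_eq T
  · rw [Finset.sum_apply']
    apply Finset.sum_eq_zero
    intro x hx
    obtain ⟨u, hu, rfl⟩ := Finset.mem_image.mp hx
    have := hc u hu
    rw [Finset.mem_sdiff] at this
    have hcu : c u ≠ a := by
      intro h; exact this.2 (by rw [h]; exact Finset.mem_insert_self _ _)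
    rw [Finsupp.single_apply, if_neg hcu]
  · rw [Finset.sum_apply']
    apply Finset.sum_eq_zero
    intro x hx
    obtain ⟨u, hu, rfl⟩ := Finset.mem_image.mp hx
    have := hc u hu
    rw [Finset.mem_sdiff] at this
    have hcu : c u ≠ b := by
      intro h
      exact this.2 (by rw [h]; exact Finset.mem_insert_of_mem (Finset.mem_singleton_self _))
    rw [Finsupp.single_apply, if_neg hcu]

/-- The core coefficient-extraction contradiction. -/
lemma core_contradiction (ℓ : V →₀ ℕ) (P Q Q' : MvPolynomial V k) (y u b1 b2 : V)
    (hyI : (monomial (ℓ + Finsupp.single y 1) 1 : MvPolynomial V k) ∉ edgeIdeal k E)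
    (huI : (monomial (ℓ + Finsupp.single u 1) 1 : MvPolynomial V k) ∉ edgeIdeal k E)
    (hb1 : ℓ b1 = 0) (hyb : y ≠ b1) (hb2 : ℓ b2 = 0) (hub : u ≠ b2)
    (hRy : X y * P - X b1 * Q - monomial (ℓ + Finsupp.single y 1) 1 ∈ edgeIdeal k E)
    (hRu : X u * P - X b2 * Q' ∈ edgeIdeal k E) : False := by
  classical
  have hcy : coeff (ℓ + Finsupp.single y 1) (X y * P - X b1 * Q
      - monomial (ℓ + Finsupp.single y 1) 1) = 0 := by
    by_contra h
    exact hyI (mon_mem_of_coeff hRy _ h)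
  have hcu : coeff (ℓ + Finsupp.single u 1) (X u * P - X b2 * Q') = 0 := by
    by_contra h
    exact huI (mon_mem_of_coeff hRu _ h)
  have e1 : coeff (ℓ + Finsupp.single y 1) (X y * P) = coeff ℓ P := by
    rw [add_comm, coeff_X_mul]
  have e2 : coeff (ℓ + Finsupp.single y 1) (X b1 * Q) = 0 := by
    rw [X, coeff_monomial_mul']
    rw [if_neg]
    intro hcon
    have h5 := Finsupp.le_def.mp hcon b1
    simp [Finsupp.single_apply, Finsupp.add_apply, hb1, hyb] at h5
  have e3 : coeff (ℓ + Finsupp.single u 1) (X u * P) = coeff ℓ P := by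
    rw [add_comm, coeff_X_mul]
  have e4 : coeff (ℓ + Finsupp.single u 1) (X b2 * Q') = 0 := by
    rw [X, coeff_monomial_mul']
    rw [if_neg]
    intro hcon
    have h5 := Finsupp.le_def.mp hcon b2
    simp [Finsupp.single_apply, Finsupp.add_apply, hb2, hub] at h5
  rw [coeff_sub, coeff_sub, e1, e2, coeff_monomial, if_pos rfl, sub_zero] at hcy
  rw [coeff_sub, e3, e4, sub_zero] at hcu
  rw [hcu, zero_sub, neg_eq_zero] at hcy
  exact one_ne_zero hcy

end MainAux
section CaseAnalysis

open MvPolynomial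

variable {k : Type*} [Field k] {V : Type*} {E : V → V → Prop} (hs : Symmetric E)

lemma pair_eq_elim {α : Type*} {p q r t : α} (h : ({p, q} : Set α) = {r, t}) :
    p = r ∨ p = t := by
  have : p ∈ ({r, t} : Set α) := h ▸ Set.mem_insert _ _
  simpa using this

variable {a b : V} {La Lb : Finset V}
  {φ : Kmod k hs →ₗ[MvPolynomial V k] MvPolynomial V k ⧸ edgeIdeal k E}

section Clause4

variable (hirr : ∀ x, ¬ E x x) (hab : E a b)
  (hφ4 : ∀ u v w (h1 : E u v) (h2 : E v w), u ≠ w →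
    (∀ x ∈ La, ({s(u,v),s(v,w)} : Set (Sym2 V)) ≠ {s(a,b), s(a,x)}) →
    (∀ x ∈ Lb, ({s(u,v),s(v,w)} : Set (Sym2 V)) ≠ {s(a,b), s(b,x)}) →
    φ (relK k hs u v w h1 h2) = 0)

include hirr hab hφ4

lemma phi_relK_zero_a (u : V) (h1 : E u a) (h2 : E a b) (hub : u ≠ b) (huLa : u ∉ La) :
    φ (relK k hs u a b h1 h2) = 0 := by
  have hanb : a ≠ b := fun h => hirr b (h ▸ hab)
  have hua : u ≠ a := fun h => hirr a (h ▸ h1)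
  apply hφ4 u a b h1 h2 hub
  · intro x hx heq
    rcases pair_eq_elim heq with h | h <;> rw [Sym2.eq_iff] at h
    · rcases h with ⟨h3, _⟩ | ⟨h3, _⟩
      · exact hua h3
      · exact hub h3
    · rcases h with ⟨h3, _⟩ | ⟨h3, _⟩
      · exact hua h3
      · exact huLa (h3 ▸ hx)
  · intro x hx heq
    rcases pair_eq_elim heq with h | h <;> rw [Sym2.eq_iff] at h
    · rcases h with ⟨h3, _⟩ | ⟨h3, _⟩
      · exact hua h3
      · exact hub h3
    · rcases h with ⟨h3, h4⟩ | ⟨h3, h4⟩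
      · exact hub h3
      · first
        | exact hanb h4
        | exact hanb h4.symm

lemma phi_relK_zero_b (u : V) (h1 : E u b) (h2 : E b a) (hua : u ≠ a) (huLb : u ∉ Lb) :
    φ (relK k hs u b a h1 h2) = 0 := by
  have hanb : a ≠ b := fun h => hirr b (h ▸ hab)
  have hub : u ≠ b := fun h => hirr b (h ▸ h1)
  apply hφ4 u b a h1 h2 hua
  · intro x hx heq
    rcases pair_eq_elim heq with h | h <;> rw [Sym2.eq_iff] at h
    · rcases h with ⟨h3, h4⟩ | ⟨h3, h4⟩
      · exact hua h3
      · first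
        | exact hanb h4
        | exact hanb h4.symm
    · rcases h with ⟨h3, h4⟩ | ⟨h3, h4⟩
      · exact hua h3
      · first
        | exact hanb h4
        | exact hanb h4.symm
  · intro x hx heq
    rcases pair_eq_elim heq with h | h <;> rw [Sym2.eq_iff] at h
    · rcases h with ⟨h3, h4⟩ | ⟨h3, h4⟩
      · exact hua h3
      · first
        | exact hanb h4
        | exact hanb h4.symm
    · rcases h with ⟨h3, _⟩ | ⟨h3, _⟩
      · exact hub h3
      · exact huLb (h3 ▸ hx)

lemma phi_relK_notab (u v w : V) (h1 : E u v) (h2 : E v w) (huw : u ≠ w)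
    (hsuv : s(u,v) ≠ s(a,b)) (hsvw : s(v,w) ≠ s(a,b)) :
    φ (relK k hs u v w h1 h2) = 0 := by
  apply hφ4 u v w h1 h2 huw
  · intro x hx heq
    have hmem : s(a,b) ∈ ({s(u,v), s(v,w)} : Set (Sym2 V)) :=
      heq.symm ▸ Set.mem_insert _ _
    rcases hmem with h | h
    · exact hsuv h.symm
    · exact hsvw (Set.mem_singleton_iff.mp h).symm
  · intro x hx heq
    have hmem : s(a,b) ∈ ({s(u,v), s(v,w)} : Set (Sym2 V)) :=
      heq.symm ▸ Set.mem_insert _ _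
    rcases hmem with h | h
    · exact hsuv h.symm
    · exact hsvw (Set.mem_singleton_iff.mp h).symm

end Clause4

open scoped Classical in
lemma relK_coord (hab : E a b) (u v w : V) (h1 : E u v) (h2 : E v w) :
    (↑(relK k hs u v w h1 h2) : edgeSet hs →₀ MvPolynomial V k) (mkEdge hs a b hab)
      = X u * (if s(v,w) = s(a,b) then 1 else 0)
        - X w * (if s(u,v) = s(a,b) then 1 else 0) := by
  classical
  have h7 : (mkEdge hs v w h2 = mkEdge hs a b hab) ↔ (s(v,w) = s(a,b)) := Subtype.ext_iff
  have h8 : (mkEdge hs u v h1 = mkEdge hs a b hab) ↔ (s(u,v) = s(a,b)) := Subtype.ext_iff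
  rw [relK_coe, Finsupp.sub_apply, Finsupp.smul_apply, Finsupp.smul_apply,
    Finsupp.single_apply, Finsupp.single_apply, smul_eq_mul, smul_eq_mul]
  by_cases hc1 : s(v,w) = s(a,b) <;> by_cases hc2 : s(u,v) = s(a,b) <;>
    simp [h7, h8, hc1, hc2]

end CaseAnalysis
section RelKEval

open MvPolynomial

variable {k : Type*} [Field k] {V : Type*} {E : V → V → Prop} {hs : Symmetric E}
variable {a b : V} {La Lb : Finset V} {lam : MvPolynomial V k}
  {φ : Kmod k hs →ₗ[MvPolynomial V k] MvPolynomial V k ⧸ edgeIdeal k E}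

lemma auxY (hirr : ∀ x, ¬ E x x) (hab : E a b) (hφ : IsT2Map k hs a b La Lb lam φ)
    (hallY : ∀ y, (y ∈ La ∨ y ∈ Lb) → lam * X y ∈ edgeIdeal k E)
    (u v w : V) (h1 : E u v) (h2 : E v w) (hsuv : s(u,v) ≠ s(a,b)) :
    φ (relK k hs u v w h1 h2) = 0 := by
  classical
  obtain ⟨hK0, hCa, hCb, h4⟩ := hφ
  by_cases hvw : s(v,w) = s(a,b)
  · have huw : u ≠ w := by
      intro h; subst h
      exact hsuv ((Sym2.eq_swap).trans hvw)
    rw [Sym2.eq_iff] at hvw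
    rcases hvw with ⟨hva, hwb⟩ | ⟨hvb, hwa⟩
    · subst hva; subst hwb
      by_cases hu : u ∈ La
      · rw [hCa u hu h1 h2]
        exact Ideal.Quotient.eq_zero_iff_mem.mpr (hallY u (Or.inl hu))
      · exact phi_relK_zero_a hs hirr hab h4 u h1 h2 huw hu
    · subst hvb; subst hwa
      by_cases hu : u ∈ Lb
      · rw [hCb u hu h1 h2]
        exact Ideal.Quotient.eq_zero_iff_mem.mpr (hallY u (Or.inr hu))
      · exact phi_relK_zero_b hs hirr hab h4 u h1 h2 huw hu
  · by_cases huw : u = w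
    · subst huw
      rw [relK_self hs u v h1 h2, map_zero]
    · exact phi_relK_notab hs hirr hab h4 u v w h1 h2 huw hsuv hvw

open scoped Classical in
lemma auxU (hirr : ∀ x, ¬ E x x) (hab : E a b) (hφ : IsT2Map k hs a b La Lb lam φ)
    (hallU : ∀ x, (E a x ∧ x ≠ b ∧ x ∉ La) ∨ (E b x ∧ x ≠ a ∧ x ∉ Lb) →
      lam * X x ∈ edgeIdeal k E)
    (u v w : V) (h1 : E u v) (h2 : E v w) (hsuv : s(u,v) ≠ s(a,b)) :
    φ (relK k hs u v w h1 h2)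
      = Ideal.Quotient.mk (edgeIdeal k E)
          (lam * (X u * (if s(v,w) = s(a,b) then 1 else 0))) := by
  obtain ⟨hK0, hCa, hCb, h4⟩ := hφ
  by_cases hvw : s(v,w) = s(a,b)
  · rw [if_pos hvw, mul_one]
    have huw : u ≠ w := by
      intro h; subst h
      exact hsuv ((Sym2.eq_swap).trans hvw)
    rw [Sym2.eq_iff] at hvw
    rcases hvw with ⟨hva, hwb⟩ | ⟨hvb, hwa⟩
    · subst hva; subst hwb
      by_cases hu : u ∈ La
      · exact hCa u hu h1 h2
      · rw [phi_relK_zero_a hs hirr hab h4 u h1 h2 huw hu]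
        exact (Ideal.Quotient.eq_zero_iff_mem.mpr (hallU u (Or.inl ⟨hs h1, huw, hu⟩))).symm
    · subst hvb; subst hwa
      by_cases hu : u ∈ Lb
      · exact hCb u hu h1 h2
      · rw [phi_relK_zero_b hs hirr hab h4 u h1 h2 huw hu]
        exact (Ideal.Quotient.eq_zero_iff_mem.mpr (hallU u (Or.inr ⟨hs h1, huw, hu⟩))).symm
  · rw [if_neg hvw, mul_zero, mul_zero, map_zero]
    by_cases huw : u = w
    · subst huw
      rw [relK_self hs u v h1 h2, map_zero]
    · exact phi_relK_notab hs hirr hab h4 u v w h1 h2 huw hsuv hvw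

lemma phiY_rel (hirr : ∀ x, ¬ E x x) (hab : E a b) (hφ : IsT2Map k hs a b La Lb lam φ)
    (hallY : ∀ y, (y ∈ La ∨ y ∈ Lb) → lam * X y ∈ edgeIdeal k E)
    (u v w : V) (h1 : E u v) (h2 : E v w) :
    φ (relK k hs u v w h1 h2) = 0 := by
  classical
  by_cases hsuv : s(u,v) = s(a,b)
  · by_cases hvw : s(v,w) = s(a,b)
    · have huw : u = w := by
        have h5 := hsuv.trans hvw.symm
        rw [Sym2.eq_iff] at h5
        rcases h5 with ⟨h6, _⟩ | ⟨h6, _⟩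
        · exact absurd h6 (fun hh => hirr v (hh ▸ h1))
        · exact h6
      subst huw
      rw [relK_self hs u v h1 h2, map_zero]
    · have hsw : s(w,v) ≠ s(a,b) := fun h => hvw ((Sym2.eq_swap).trans h)
      rw [relK_neg hs u v w h1 h2, map_neg φ,
        auxY hirr hab hφ hallY w v u (hs h2) (hs h1) hsw, neg_zero]
  · exact auxY hirr hab hφ hallY u v w h1 h2 hsuv

open scoped Classical in
lemma phiU_rel (hirr : ∀ x, ¬ E x x) (hab : E a b) (hφ : IsT2Map k hs a b La Lb lam φ)
    (hallU : ∀ x, (E a x ∧ x ≠ b ∧ x ∉ La) ∨ (E b x ∧ x ≠ a ∧ x ∉ Lb) →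
      lam * X x ∈ edgeIdeal k E)
    (u v w : V) (h1 : E u v) (h2 : E v w) :
    φ (relK k hs u v w h1 h2)
      = Ideal.Quotient.mk (edgeIdeal k E)
          (lam * (↑(relK k hs u v w h1 h2) : edgeSet hs →₀ MvPolynomial V k)
            (mkEdge hs a b hab)) := by
  rw [relK_coord hs hab u v w h1 h2]
  by_cases hsuv : s(u,v) = s(a,b)
  · by_cases hvw : s(v,w) = s(a,b)
    · have huw : u = w := by
        have h5 := hsuv.trans hvw.symm
        rw [Sym2.eq_iff] at h5
        rcases h5 with ⟨h6, _⟩ | ⟨h6, _⟩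
        · exact absurd h6 (fun hh => hirr v (hh ▸ h1))
        · exact h6
      subst huw
      rw [relK_self hs u v h1 h2, map_zero, if_pos hvw, if_pos hsuv]
      simp
    · have hvu : s(v,u) = s(a,b) := (Sym2.eq_swap).trans hsuv
      have hsw : s(w,v) ≠ s(a,b) := fun h => hvw ((Sym2.eq_swap).trans h)
      rw [relK_neg hs u v w h1 h2, map_neg φ,
        auxU hirr hab hφ hallU w v u (hs h2) (hs h1) hsw]
      rw [if_pos hvu, if_neg hvw, if_pos hsuv]
      have hring : lam * (X u * 0 - X w * 1) = -(lam * (X w * 1)) := by ring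
      rw [hring, RingHom.map_neg]
  · rw [if_neg hsuv, mul_zero, sub_zero]
    exact auxU hirr hab hφ hallU u v w h1 h2 hsuv

end RelKEval
section FinalAux

open MvPolynomial

variable {k : Type*} [Field k] {V : Type*} {E : V → V → Prop}

lemma mem_nbhd [Fintype V] {v w : V} : w ∈ nbhd E v ↔ E v w := by
  classical
  simp [nbhd]

/-- The map `z ↦ λ·z_{ab} mod I` as a linear map on `K`. -/
noncomputable def etaMap (hs : Symmetric E) (a b : V) (hab : E a b)
    (lam : MvPolynomial V k) :
    Kmod k hs →ₗ[MvPolynomial V k] MvPolynomial V k ⧸ edgeIdeal k E where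
  toFun z := Ideal.Quotient.mk (edgeIdeal k E)
    (lam * (z : edgeSet hs →₀ MvPolynomial V k) (mkEdge hs a b hab))
  map_add' z1 z2 := by
    simp only [Submodule.coe_add, Finsupp.add_apply, mul_add, RingHom.map_add]
  map_smul' c z := by
    simp only [Submodule.coe_smul, Finsupp.smul_apply, smul_eq_mul, RingHom.id_apply]
    rw [show c • Ideal.Quotient.mk (edgeIdeal k E)
          (lam * ((z : edgeSet hs →₀ MvPolynomial V k) (mkEdge hs a b hab)))
        = Ideal.Quotient.mk (edgeIdeal k E)
          (c * (lam * ((z : edgeSet hs →₀ MvPolynomial V k) (mkEdge hs a b hab)))) from rfl]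
    congr 1
    ring

lemma etaMap_apply (hs : Symmetric E) (a b : V) (hab : E a b)
    (lam : MvPolynomial V k) (z : Kmod k hs) :
    etaMap hs a b hab lam z = Ideal.Quotient.mk (edgeIdeal k E)
      (lam * (z : edgeSet hs →₀ MvPolynomial V k) (mkEdge hs a b hab)) := rfl

lemma eta_K0 (hs : Symmetric E) (a b : V) (hab : E a b) (lam : MvPolynomial V k)
    (z : Kmod k hs) (hz : (z : edgeSet hs →₀ MvPolynomial V k) ∈ K0 k hs) :
    etaMap hs a b hab lam z = 0 := by
  classical
  have hle : K0 k hs ≤ Submodule.comap (Finsupp.lapply (mkEdge hs a b hab))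
      (edgeIdeal k E) := by
    rw [K0, Submodule.span_le]
    rintro x ⟨e, e2, hne, rfl⟩
    simp only [SetLike.mem_coe, Submodule.mem_comap, Finsupp.lapply_apply, Finsupp.sub_apply,
      Finsupp.smul_apply, Finsupp.single_apply, smul_eq_mul]
    apply Submodule.sub_mem
    · split_ifs
      · rw [mul_one]; exact edgeMon_mem hs k e
      · rw [mul_zero]; exact Submodule.zero_mem _
    · split_ifs
      · rw [mul_one]; exact edgeMon_mem hs k e2
      · rw [mul_zero]; exact Submodule.zero_mem _
  have hcoord := hle hz
  rw [Submodule.mem_comap, Finsupp.lapply_apply] at hcoord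
  rw [etaMap_apply, Ideal.Quotient.eq_zero_iff_mem]
  exact Ideal.mul_mem_left _ _ hcoord

end FinalAux
set_option maxHeartbeats 1000000 in


/-- With notation as in Statement 12, if the map `φ = φ^λ_{L_a,L_b}` is
nonzero and is not equal to `λ·φ_{ab}` (where `φ_{ab} : K → R/I` is the restriction of the
coordinate map `M → R/I`, `z ↦ z_{ab} mod I`), then `φ` is not the restriction to `K` of
any `R`-linear map `M → R/I`; that is, it represents a nonzero class in `T²(R/I)`. -/
theorem statement13 {k : Type*} [Field k] {V : Type*} [Fintype V] [DecidableEq V]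
    {E : V → V → Prop} (hs : Symmetric E) (hirr : ∀ v, ¬ E v v)
    (a b : V) (hab : E a b) (La Lb : Finset V)
    (hLa : La ⊆ (nbhd E a).erase b) (hLb : Lb ⊆ (nbhd E b).erase a)
    (hcompat : ∀ z, E a z → E b z → (z ∈ La ↔ z ∈ Lb))
    (lam : MvPolynomial V k) (hlam : lam ∈ DeltaSet k E a b La Lb)
    (φ : Kmod k hs →ₗ[MvPolynomial V k] MvPolynomial V k ⧸ edgeIdeal k E)
    (hφ : IsT2Map k hs a b La Lb lam φ) (hφne : φ ≠ 0)
    (hnotmult : ¬ ∀ z : Kmod k hs,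
      φ z = Ideal.Quotient.mk (edgeIdeal k E)
        (lam * (z : edgeSet hs →₀ MvPolynomial V k) (mkEdge hs a b hab))) :
    ¬ ∃ ψ : (edgeSet hs →₀ MvPolynomial V k) →ₗ[MvPolynomial V k]
        MvPolynomial V k ⧸ edgeIdeal k E,
      ∀ z : Kmod k hs, φ z = ψ z := by
  classical
  intro hex
  obtain ⟨ψ, hψ⟩ := hex
  obtain ⟨ℓ, hlameq, hla0, hlb0⟩ := lam_spec a b La Lb hlam
  -- Step 1: extract `y ∈ La ∪ Lb` with `λ·x_y ∉ I`
  have hy : ∃ y, (y ∈ La ∨ y ∈ Lb) ∧ lam * MvPolynomial.X y ∉ edgeIdeal k E := by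
    by_contra hcon
    push_neg at hcon
    apply hφne
    apply LinearMap.ext
    intro z
    rw [LinearMap.zero_apply]
    exact vanish_of_gen hs hirr φ hφ.1
      (fun u v w h1 h2 => phiY_rel hirr hab hφ hcon u v w h1 h2) z
  obtain ⟨y, hymem, hyI⟩ := hy
  -- Step 2: extract a "bad" vertex `u` with `λ·x_u ∉ I`
  have hu : ∃ u, ((E a u ∧ u ≠ b ∧ u ∉ La) ∨ (E b u ∧ u ≠ a ∧ u ∉ Lb)) ∧
      lam * MvPolynomial.X u ∉ edgeIdeal k E := by
    by_contra hcon
    push_neg at hcon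
    apply hnotmult
    intro z
    have hzero : ∀ z : Kmod k hs, (φ - etaMap hs a b hab lam) z = 0 := by
      apply vanish_of_gen hs hirr (φ - etaMap hs a b hab lam)
      · intro z hz
        rw [LinearMap.sub_apply, hφ.1 z hz, eta_K0 hs a b hab lam z hz, sub_zero]
      · intro u v w h1 h2
        rw [LinearMap.sub_apply, phiU_rel hirr hab hφ hcon u v w h1 h2,
          etaMap_apply, sub_self]
    have hz2 := hzero z
    rw [LinearMap.sub_apply, sub_eq_zero] at hz2
    rw [hz2, etaMap_apply]
  obtain ⟨u, humem, huI⟩ := hu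
  -- Step 3: lifts and the two relations
  obtain ⟨P, hP⟩ := Ideal.Quotient.mk_surjective
    (ψ (Finsupp.single (mkEdge hs a b hab) (1 : MvPolynomial V k)))
  have hsmul : ∀ (r x : MvPolynomial V k),
      r • Ideal.Quotient.mk (edgeIdeal k E) x = Ideal.Quotient.mk (edgeIdeal k E) (r * x) :=
    fun r x => rfl
  have hmkba : mkEdge hs b a (hs hab) = mkEdge hs a b hab := mkEdge_symm hs hab (hs hab)
  -- relation coming from y
  have hyrel : ∃ b1 Q, ℓ b1 = 0 ∧ y ≠ b1 ∧
      (MvPolynomial.X y * P - MvPolynomial.X b1 * Q - lam * MvPolynomial.X y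
        ∈ edgeIdeal k E) := by
    rcases hymem with hyLa | hyLb
    · have h6 := Finset.mem_erase.mp (hLa hyLa)
      have hEay : E a y := mem_nbhd.mp h6.2
      have h1' : E y a := hs hEay
      have hv := hφ.2.1 y hyLa h1' hab
      have hψv : φ (relK k hs y a b h1' hab)
          = (MvPolynomial.X y : MvPolynomial V k) • ψ (Finsupp.single (mkEdge hs a b hab) 1)
            - (MvPolynomial.X b : MvPolynomial V k) • ψ (Finsupp.single (mkEdge hs y a h1') 1) := by
        rw [hψ, relK_coe, map_sub, map_smul, map_smul]
      obtain ⟨Q, hQ⟩ := Ideal.Quotient.mk_surjective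
        (ψ (Finsupp.single (mkEdge hs y a h1') (1 : MvPolynomial V k)))
      refine ⟨b, Q, hlb0, h6.1, ?_⟩
      rw [← Ideal.Quotient.eq_zero_iff_mem]
      rw [RingHom.map_sub, RingHom.map_sub, ← hsmul, ← hsmul, hP, hQ, ← hψv, hv, sub_self]
    · have h6 := Finset.mem_erase.mp (hLb hyLb)
      have hEby : E b y := mem_nbhd.mp h6.2
      have h1' : E y b := hs hEby
      have hv := hφ.2.2.1 y hyLb h1' (hs hab)
      have hψv : φ (relK k hs y b a h1' (hs hab))
          = (MvPolynomial.X y : MvPolynomial V k) • ψ (Finsupp.single (mkEdge hs a b hab) 1)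
            - (MvPolynomial.X a : MvPolynomial V k) • ψ (Finsupp.single (mkEdge hs y b h1') 1) := by
        rw [hψ, relK_coe, map_sub, map_smul, map_smul, hmkba]
      obtain ⟨Q, hQ⟩ := Ideal.Quotient.mk_surjective
        (ψ (Finsupp.single (mkEdge hs y b h1') (1 : MvPolynomial V k)))
      refine ⟨a, Q, hla0, h6.1, ?_⟩
      rw [← Ideal.Quotient.eq_zero_iff_mem]
      rw [RingHom.map_sub, RingHom.map_sub, ← hsmul, ← hsmul, hP, hQ, ← hψv, hv, sub_self]
  -- relation coming from u
  have hurel : ∃ b2 Q2, ℓ b2 = 0 ∧ u ≠ b2 ∧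
      (MvPolynomial.X u * P - MvPolynomial.X b2 * Q2 ∈ edgeIdeal k E) := by
    rcases humem with ⟨hEau, hub, huLa⟩ | ⟨hEbu, hua, huLb⟩
    · have h1' : E u a := hs hEau
      have hv := phi_relK_zero_a hs hirr hab hφ.2.2.2 u h1' hab hub huLa
      have hψv : φ (relK k hs u a b h1' hab)
          = (MvPolynomial.X u : MvPolynomial V k) • ψ (Finsupp.single (mkEdge hs a b hab) 1)
            - (MvPolynomial.X b : MvPolynomial V k) • ψ (Finsupp.single (mkEdge hs u a h1') 1) := by
        rw [hψ, relK_coe, map_sub, map_smul, map_smul]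
      obtain ⟨Q, hQ⟩ := Ideal.Quotient.mk_surjective
        (ψ (Finsupp.single (mkEdge hs u a h1') (1 : MvPolynomial V k)))
      refine ⟨b, Q, hlb0, hub, ?_⟩
      rw [← Ideal.Quotient.eq_zero_iff_mem]
      rw [RingHom.map_sub, ← hsmul, ← hsmul, hP, hQ, ← hψv, hv]
    · have h1' : E u b := hs hEbu
      have hv := phi_relK_zero_b hs hirr hab hφ.2.2.2 u h1' (hs hab) hua huLb
      have hψv : φ (relK k hs u b a h1' (hs hab))
          = (MvPolynomial.X u : MvPolynomial V k) • ψ (Finsupp.single (mkEdge hs a b hab) 1)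
            - (MvPolynomial.X a : MvPolynomial V k) • ψ (Finsupp.single (mkEdge hs u b h1') 1) := by
        rw [hψ, relK_coe, map_sub, map_smul, map_smul, hmkba]
      obtain ⟨Q, hQ⟩ := Ideal.Quotient.mk_surjective
        (ψ (Finsupp.single (mkEdge hs u b h1') (1 : MvPolynomial V k)))
      refine ⟨a, Q, hla0, hua, ?_⟩
      rw [← Ideal.Quotient.eq_zero_iff_mem]
      rw [RingHom.map_sub, ← hsmul, ← hsmul, hP, hQ, ← hψv, hv]
  obtain ⟨b1, Q, hb1, hyb1, hRy⟩ := hyrel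
  obtain ⟨b2, Q2, hb2, hub2, hRu⟩ := hurel
  have hxmul : ∀ (x : V), lam * MvPolynomial.X x
      = MvPolynomial.monomial (ℓ + Finsupp.single x 1) (1:k) := by
    intro x
    rw [hlameq, MvPolynomial.X, MvPolynomial.monomial_mul, one_mul]
  rw [hxmul y] at hyI hRy
  rw [hxmul u] at huI
  exact core_contradiction ℓ P Q Q2 y u b1 b2 hyI huI hb1 hyb1 hb2 hub2 hRy hRu

end
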